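/- Let E be a complex Banach space of functions on ℝ⁺ satisfying (H1), (H2), (H3), and let H be a nonzero separable complex Hilbert space. If Φ ∈ Ē and u ∈ H, then the function ℝ⁺ ∋ x ↦ ⟨Φ(x), u⟩ ∈ ℂ is an element of E. -/

import Mathlib

open Complex Filter Topology

noncomputable section

/-- Translation by `a`, cut off to `ℝ⁺`: `(transFun a f) x = f (x - a)` for `x ≥ 0`,
and `0` for `x < 0`.  For `a ≥ 0` and `f` supported in `ℝ⁺` this is the operator `S_a`,
and for `a = -b ≤ 0` it is the operator `S_{-b} : f ↦ f (· + b)`. -/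
def transFun {α : Type*} [Zero α] (a : ℝ) (f : ℝ → α) : ℝ → α :=
  fun x => if 0 ≤ x then f (x - a) else 0

/-- Modulation: `(modFun a f) x = e^{iax} f x`. -/
def modFun (a : ℝ) (f : ℝ → ℂ) : ℝ → ℂ :=
  fun x => Complex.exp (Complex.I * (a : ℂ) * (x : ℂ)) * f x

/-- `C^∞` functions with compact support contained in `(0, ∞)`. -/
def IsTestPlus (g : ℝ → ℂ) : Prop :=
  ContDiff ℝ (⊤ : ℕ∞) g ∧ HasCompactSupport g ∧ tsupport g ⊆ Set.Ioi (0 : ℝ)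

/-- `C^∞` functions with compact support on `ℝ`. -/
def IsTest (g : ℝ → ℂ) : Prop :=
  ContDiff ℝ (⊤ : ℕ∞) g ∧ HasCompactSupport g

/-- The Fourier transformation `(𝓕 f)(ξ) = (2π)^{-1/2} ∫ f x e^{-iξx} dx`
(defined by this integral formula; it is applied below only to integrable functions,
on which it agrees with the Fourier–Plancherel transformation). -/
def FT {H : Type*} [NormedAddCommGroup H] [NormedSpace ℂ H] (f : ℝ → H) : ℝ → H :=
  fun ξ => (Real.sqrt (2 * Real.pi))⁻¹ •
    ∫ x : ℝ, Complex.exp (-(Complex.I * (ξ : ℂ) * (x : ℂ))) • f x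

/-- The inverse Fourier transformation `(𝓕⁻¹ f)(x) = (2π)^{-1/2} ∫ f ξ e^{iξx} dξ`. -/
def FTinv {H : Type*} [NormedAddCommGroup H] [NormedSpace ℂ H] (f : ℝ → H) : ℝ → H :=
  fun x => (Real.sqrt (2 * Real.pi))⁻¹ •
    ∫ ξ : ℝ, Complex.exp (Complex.I * (ξ : ℂ) * (x : ℂ)) • f ξ

/-- A complex Banach space `E` of (a.e.-equivalence classes of) locally integrable
functions on `ℝ⁺` — realized as functions on `ℝ` vanishing a.e. on `(-∞, 0)` —
satisfying the hypotheses (H1), (H2) and (H3). -/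
structure WHSpace where
  /-- the carrier Banach space -/
  E : Type
  [nacg : NormedAddCommGroup E]
  [nsp : NormedSpace ℂ E]
  [cpl : CompleteSpace E]
  /-- the realization of elements of `E` as functions on `ℝ⁺`; two elements of `E`
  coincide iff their realizations agree almost everywhere -/
  toFun : E →ₗ[ℂ] (ℝ → ℂ)
  inj : ∀ f g : E, toFun f =ᵐ[MeasureTheory.volume] toFun g → f = g
  meas : ∀ f : E, MeasureTheory.AEStronglyMeasurable (toFun f) MeasureTheory.volume
  supp : ∀ f : E, ∀ᵐ x ∂MeasureTheory.volume, x < 0 → toFun f x = 0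
  /-- (H1): `E ⊆ L¹_loc` -/
  locInt : ∀ f : E, MeasureTheory.LocallyIntegrable (toFun f) MeasureTheory.volume
  /-- (H1): the inclusion `E ⊆ L¹_loc(ℝ⁺)` is continuous -/
  incl_cont : ∀ K : Set ℝ, IsCompact K → ∃ C > 0, ∀ f : E,
    ∫ x in K, ‖toFun f x‖ ≤ C * ‖f‖
  /-- (H1): `C_c^∞((0,∞)) ⊆ E` -/
  test_mem : ∀ g : ℝ → ℂ, IsTestPlus g → ∃ f : E, toFun f =ᵐ[MeasureTheory.volume] g
  /-- (H1): the inclusion `C_c^∞((0,∞)) ⊆ E` is continuous -/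
  test_cont : ∀ K : Set ℝ, IsCompact K → ∃ C > 0, ∃ N : ℕ,
    ∀ (f : E) (g : ℝ → ℂ), IsTestPlus g → tsupport g ⊆ K →
      toFun f =ᵐ[MeasureTheory.volume] g →
      ‖f‖ ≤ C * ∑ k ∈ Finset.range (N + 1), ⨆ x : ℝ, ‖iteratedDeriv k g x‖
  /-- (H1): `C_c^∞((0,∞))` is dense in `E` -/
  test_dense : Dense {f : E | ∃ g : ℝ → ℂ, IsTestPlus g ∧ toFun f =ᵐ[MeasureTheory.volume] g}
  /-- (H2): the translations `S_a`, `a ∈ ℝ`, act boundedly on `E` -/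
  S : ℝ → E →L[ℂ] E
  S_spec : ∀ (a : ℝ) (f : E), toFun (S a f) =ᵐ[MeasureTheory.volume] transFun a (toFun f)
  /-- (H2): `sup_{a ∈ K} ‖S_a‖ < ∞` for every compact `K ⊆ ℝ` -/
  S_bdd : ∀ K : Set ℝ, IsCompact K → ∃ C : ℝ, ∀ a ∈ K, ‖S a‖ ≤ C
  /-- (H3): the modulations `Γ_a`, `a ∈ ℝ`, act boundedly on `E` -/
  Mod : ℝ → E →L[ℂ] E
  Mod_spec : ∀ (a : ℝ) (f : E), toFun (Mod a f) =ᵐ[MeasureTheory.volume] modFun a (toFun f)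
  /-- (H3): `sup_{a ∈ ℝ} ‖Γ_a‖ < ∞` -/
  Mod_bdd : ∃ C : ℝ, ∀ a : ℝ, ‖Mod a‖ ≤ C

attribute [instance] WHSpace.nacg WHSpace.nsp WHSpace.cpl

/-- Elements of the algebraic tensor product `C_c^∞((0,∞)) ⊗ H`: finite sums
`Σ φ_i u_i` with `φ_i ∈ C_c^∞((0,∞))` and `u_i ∈ H`. -/
def IsTestPlusH {H : Type*} [AddCommGroup H] [Module ℂ H] (G : ℝ → H) : Prop :=
  ∃ (n : ℕ) (φ : Fin n → ℝ → ℂ) (u : Fin n → H),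
    (∀ i, IsTestPlus (φ i)) ∧ G = fun x => ∑ i, φ i x • u i

/-- The Banach space `Ē` of (a.e.-equivalence classes of) measurable functions
`F : ℝ⁺ → H` such that `x ↦ ‖F x‖_H` belongs to `E`, with norm
`‖F‖_Ē = ‖ x ↦ ‖F x‖_H ‖_E`, together with the translations `𝐒_a` acting on it. -/
structure WHSpaceH (W : WHSpace) (H : Type)
    [NormedAddCommGroup H] [InnerProductSpace ℂ H] where
  /-- the carrier Banach space -/
  Eb : Type
  [nacg : NormedAddCommGroup Eb]
  [nsp : NormedSpace ℂ Eb]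
  [cpl : CompleteSpace Eb]
  /-- the realization of elements of `Ē` as `H`-valued functions on `ℝ⁺`; two elements
  coincide iff their realizations agree almost everywhere -/
  toFun : Eb →ₗ[ℂ] (ℝ → H)
  inj : ∀ F G : Eb, toFun F =ᵐ[MeasureTheory.volume] toFun G → F = G
  meas : ∀ F : Eb, MeasureTheory.AEStronglyMeasurable (toFun F) MeasureTheory.volume
  supp : ∀ F : Eb, ∀ᵐ x ∂MeasureTheory.volume, x < 0 → toFun F x = 0
  /-- for `F ∈ Ē`, the function `x ↦ ‖F x‖_H` belongs to `E` -/
  norm_mem : ∀ F : Eb, ∃ e : W.E,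
    W.toFun e =ᵐ[MeasureTheory.volume] fun x => (‖toFun F x‖ : ℂ)
  /-- the norm of `Ē`: `‖F‖_Ē = ‖ x ↦ ‖F x‖_H ‖_E` -/
  norm_eq : ∀ (F : Eb) (e : W.E),
    (W.toFun e =ᵐ[MeasureTheory.volume] fun x => (‖toFun F x‖ : ℂ)) → ‖F‖ = ‖e‖
  /-- `Ē` consists of all measurable `G : ℝ⁺ → H` with `(x ↦ ‖G x‖_H) ∈ E` -/
  mem_of_norm : ∀ G : ℝ → H, MeasureTheory.AEStronglyMeasurable G MeasureTheory.volume →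
    (∀ᵐ x ∂MeasureTheory.volume, x < 0 → G x = 0) →
    (∃ e : W.E, W.toFun e =ᵐ[MeasureTheory.volume] fun x => (‖G x‖ : ℂ)) →
    ∃ F : Eb, toFun F =ᵐ[MeasureTheory.volume] G
  /-- `C_c^∞((0,∞)) ⊗ H ⊆ Ē` -/
  tensor_mem : ∀ G : ℝ → H, IsTestPlusH G → ∃ F : Eb, toFun F =ᵐ[MeasureTheory.volume] G
  /-- the translations `𝐒_a`, `a ∈ ℝ`, act boundedly on `Ē` -/
  SH : ℝ → Eb →L[ℂ] Eb
  SH_spec : ∀ (a : ℝ) (F : Eb),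
    toFun (SH a F) =ᵐ[MeasureTheory.volume] transFun a (toFun F)

attribute [instance] WHSpaceH.nacg WHSpaceH.nsp WHSpaceH.cpl

open MeasureTheory

/-- A Wiener-Hopf operator on `E`: a bounded operator `T` with `S_{-a} T S_a = T`
for all `a ≥ 0`. -/
def IsWienerHopf (W : WHSpace) (T : W.E →L[ℂ] W.E) : Prop :=
  ∀ a : ℝ, 0 ≤ a → (W.S (-a)).comp (T.comp (W.S a)) = T

/-- `ρ(S)`, the spectral radius of `S = S_1`. -/
def WHSpace.rS (W : WHSpace) : ℝ := (spectralRadius ℂ (W.S 1)).toReal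

/-- `ρ(S_{-1})`, the spectral radius of `S_{-1}`. -/
def WHSpace.rSm (W : WHSpace) : ℝ := (spectralRadius ℂ (W.S (-1))).toReal

/-- `I_E = [-ln ρ(S_{-1}), ln ρ(S)]`. -/
def WHSpace.IE (W : WHSpace) : Set ℝ := Set.Icc (-Real.log W.rSm) (Real.log W.rS)

/-- `U_E = {z ∈ ℂ : Im z ∈ I_E}`. -/
def WHSpace.UE (W : WHSpace) : Set ℂ := {z : ℂ | z.im ∈ W.IE}

/-- The open strip `int U_E = {z ∈ ℂ : -ln ρ(S_{-1}) < Im z < ln ρ(S)}`. -/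
def WHSpace.stripE (W : WHSpace) : Set ℂ :=
  {z : ℂ | z.im ∈ Set.Ioo (-Real.log W.rSm) (Real.log W.rS)}

/-- A Wiener-Hopf operator on `Ē`: a bounded operator `𝐓` with `𝐒_{-a} 𝐓 𝐒_a = 𝐓`
for all `a ≥ 0`. -/
def IsWienerHopfH {W : WHSpace} {H : Type} [NormedAddCommGroup H] [InnerProductSpace ℂ H]
    (V : WHSpaceH W H) (T : V.Eb →L[ℂ] V.Eb) : Prop :=
  ∀ a : ℝ, 0 ≤ a → (V.SH (-a)).comp (T.comp (V.SH a)) = T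


private lemma refl_iso {H : Type} [NormedAddCommGroup H] [InnerProductSpace ℂ H]
    (v w : H) (hv : ‖v‖ = 1) :
    ‖(2:ℂ) • ((inner ℂ v w : ℂ) • v) - w‖ = ‖w‖ := by
  have h1 : (inner ℂ v v : ℂ) = 1 := by
    rw [inner_self_eq_norm_sq_to_K, hv]; norm_num
  have h2 : (inner ℂ ((2:ℂ) • ((inner ℂ v w : ℂ) • v) - w) ((2:ℂ) • ((inner ℂ v w : ℂ) • v) - w) : ℂ)
      = inner ℂ w w := by
    simp [inner_sub_left, inner_sub_right, inner_smul_left, inner_smul_right, h1,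
      inner_conj_symm, map_ofNat, -inner_self_eq_norm_sq_to_K]
    ring
  rw [norm_eq_sqrt_re_inner (𝕜 := ℂ), norm_eq_sqrt_re_inner (𝕜 := ℂ) w, h2]

private lemma smul_unit_norm {H : Type} [NormedAddCommGroup H] [InnerProductSpace ℂ H]
    {v : H} (hv : ‖v‖ = 1) (c : ℂ) : ‖c • v‖ = ‖c‖ := by
  rw [norm_smul, hv, mul_one]

/-- If `F ∈ Ē` is realized by `x ↦ r x • v` with `r` real-valued and `v` a unit vector,
then `r` (as a `ℂ`-valued function) is realized by an element of `E`. -/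
private lemma WHSpaceH.real_mem {W : WHSpace} {H : Type} [NormedAddCommGroup H]
    [InnerProductSpace ℂ H] (V : WHSpaceH W H) {v : H} (hv : ‖v‖ = 1)
    (r : ℝ → ℝ) (F : V.Eb)
    (hF : V.toFun F =ᵐ[volume] fun x => (r x : ℂ) • v) :
    ∃ e : W.E, W.toFun e =ᵐ[volume] fun x => (r x : ℂ) := by
  have hv0 : v ≠ 0 := fun h => by simp [h] at hv
  obtain ⟨eabs, heabs⟩ := V.norm_mem F
  have heabs' : W.toFun eabs =ᵐ[volume] fun x => ((|r x| : ℝ) : ℂ) := by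
    filter_upwards [heabs, hF] with x h1 h2
    rw [h1, h2, smul_unit_norm hv]
    simp
  have habs_meas : MeasureTheory.AEStronglyMeasurable
      (fun x => ((|r x| : ℝ) : ℂ) • v) volume := by
    refine MeasureTheory.AEStronglyMeasurable.congr
      ((Complex.continuous_ofReal.comp_aestronglyMeasurable (V.meas F).norm).smul
        (MeasureTheory.aestronglyMeasurable_const : MeasureTheory.AEStronglyMeasurable (fun _ : ℝ => v) volume)) ?_
    filter_upwards [hF] with x h
    show ((‖V.toFun F x‖ : ℝ) : ℂ) • v = _
    rw [h, smul_unit_norm hv]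
    simp
  have habs_supp : ∀ᵐ x ∂volume, x < 0 → ((|r x| : ℝ) : ℂ) • v = 0 := by
    filter_upwards [V.supp F, hF] with x h1 h2 hx
    have h0 : (r x : ℂ) • v = 0 := by rw [← h2, h1 hx]
    rcases smul_eq_zero.mp h0 with h | h
    · rw [Complex.ofReal_eq_zero.mp h]; simp
    · exact absurd h hv0
  obtain ⟨Fabs, hFabs⟩ := V.mem_of_norm _ habs_meas habs_supp
    ⟨eabs, by
      filter_upwards [heabs'] with x h
      rw [h, smul_unit_norm hv]
      simp⟩
  have hplus : V.toFun ((2⁻¹ : ℂ) • (F + Fabs)) =ᵐ[volume]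
      fun x => (((r x + |r x|) / 2 : ℝ) : ℂ) • v := by
    have heq : V.toFun ((2⁻¹ : ℂ) • (F + Fabs))
        = (2⁻¹ : ℂ) • (V.toFun F + V.toFun Fabs) := by
      rw [_root_.map_smul, map_add]
    rw [heq]
    filter_upwards [hF, hFabs] with x h1 h2
    show (2⁻¹ : ℂ) • (V.toFun F x + V.toFun Fabs x) = _
    rw [h1, h2, ← add_smul, smul_smul]
    congr 1
    push_cast
    ring
  obtain ⟨e1, he1⟩ := V.norm_mem ((2⁻¹ : ℂ) • (F + Fabs))
  have he1' : W.toFun e1 =ᵐ[volume] fun x => (((r x + |r x|) / 2 : ℝ) : ℂ) := by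
    filter_upwards [he1, hplus] with x h1 h2
    rw [h1, h2, smul_unit_norm hv]
    have habs : |((r x + |r x|) / 2 : ℝ)| = (r x + |r x|) / 2 :=
      abs_of_nonneg (by nlinarith [neg_abs_le (r x)])
    rw [Complex.norm_real, Real.norm_eq_abs, habs]
  have hminus : V.toFun ((2⁻¹ : ℂ) • (Fabs - F)) =ᵐ[volume]
      fun x => (((|r x| - r x) / 2 : ℝ) : ℂ) • v := by
    have heq : V.toFun ((2⁻¹ : ℂ) • (Fabs - F))
        = (2⁻¹ : ℂ) • (V.toFun Fabs - V.toFun F) := by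
      rw [_root_.map_smul, map_sub]
    rw [heq]
    filter_upwards [hF, hFabs] with x h1 h2
    show (2⁻¹ : ℂ) • (V.toFun Fabs x - V.toFun F x) = _
    rw [h1, h2, ← sub_smul, smul_smul]
    congr 1
    push_cast
    ring
  obtain ⟨e2, he2⟩ := V.norm_mem ((2⁻¹ : ℂ) • (Fabs - F))
  have he2' : W.toFun e2 =ᵐ[volume] fun x => (((|r x| - r x) / 2 : ℝ) : ℂ) := by
    filter_upwards [he2, hminus] with x h1 h2
    rw [h1, h2, smul_unit_norm hv]
    have habs : |((|r x| - r x) / 2 : ℝ)| = (|r x| - r x) / 2 :=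
      abs_of_nonneg (by nlinarith [le_abs_self (r x)])
    rw [Complex.norm_real, Real.norm_eq_abs, habs]
  refine ⟨e1 - e2, ?_⟩
  have heq : W.toFun (e1 - e2) = W.toFun e1 - W.toFun e2 := map_sub _ _ _
  rw [heq]
  filter_upwards [he1', he2'] with x h1 h2
  show W.toFun e1 x - W.toFun e2 x = _
  rw [h1, h2]
  push_cast
  ring

/-- If `Φ ∈ Ē` and `u ∈ H`, then `x ↦ ⟨Φ x, u⟩` belongs to `E`.
(Here `⟨·,·⟩` is linear in the first variable, i.e. `⟨Φ x, u⟩ = inner u (Φ x)` in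
Mathlib's convention.) -/
theorem pairing_mem (W : WHSpace) (H : Type) [NormedAddCommGroup H]
    [InnerProductSpace ℂ H] [CompleteSpace H] [TopologicalSpace.SeparableSpace H]
    [Nontrivial H] (V : WHSpaceH W H) (Φ : V.Eb) (u : H) :
    ∃ e : W.E, W.toFun e =ᵐ[volume] fun x => (inner ℂ u (V.toFun Φ x) : ℂ) := by
  classical
  by_cases hu : u = 0
  · refine ⟨0, ?_⟩
    have h0 : W.toFun 0 = (0 : ℝ → ℂ) := map_zero _
    rw [h0, hu]
    filter_upwards with x
    simp
  have hnu : (0:ℝ) < ‖u‖ := norm_pos_iff.mpr hu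
  set v : H := ((‖u‖ : ℝ)⁻¹ : ℂ) • u with hv_def
  have hv : ‖v‖ = 1 := by
    rw [hv_def, norm_smul]
    simp [Real.norm_eq_abs, abs_of_pos (inv_pos.mpr hnu)]
    field_simp
  have hinner_v : ∀ w : H, (inner ℂ v w : ℂ) = ((‖u‖⁻¹ : ℝ) : ℂ) * (inner ℂ u w : ℂ) := by
    intro w
    rw [hv_def, inner_smul_left]
    congr 1
    simp [Complex.conj_ofReal]
  set g : ℝ → ℂ := fun x => (inner ℂ u (V.toFun Φ x) : ℂ) with hg_def
  have hg_meas : MeasureTheory.AEStronglyMeasurable g volume :=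
    MeasureTheory.AEStronglyMeasurable.inner MeasureTheory.aestronglyMeasurable_const
      (V.meas Φ)
  have hg_supp : ∀ᵐ x ∂volume, x < 0 → g x = 0 := by
    filter_upwards [V.supp Φ] with x h hx
    simp only [hg_def]
    rw [h hx]
    simp
  obtain ⟨eN, heN⟩ := V.norm_mem Φ
  obtain ⟨FR, hFR⟩ := V.mem_of_norm
    (fun x => (2:ℂ) • ((inner ℂ v (V.toFun Φ x) : ℂ) • v) - V.toFun Φ x)
    (by
      have m1 : MeasureTheory.AEStronglyMeasurable
          (fun x => (inner ℂ v (V.toFun Φ x) : ℂ)) volume :=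
        MeasureTheory.AEStronglyMeasurable.inner MeasureTheory.aestronglyMeasurable_const
          (V.meas Φ)
      exact ((m1.smul MeasureTheory.aestronglyMeasurable_const).const_smul (2:ℂ)).sub
        (V.meas Φ))
    (by
      filter_upwards [V.supp Φ] with x h hx
      rw [h hx]; simp)
    ⟨eN, by
      filter_upwards [heN] with x h
      rw [h, refl_iso _ _ hv]⟩
  have hFP : V.toFun ((2⁻¹ : ℂ) • (Φ + FR)) =ᵐ[volume]
      fun x => (inner ℂ v (V.toFun Φ x) : ℂ) • v := by
    have heq : V.toFun ((2⁻¹:ℂ) • (Φ + FR)) = (2⁻¹:ℂ) • (V.toFun Φ + V.toFun FR) := by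
      rw [_root_.map_smul, map_add]
    rw [heq]
    filter_upwards [hFR] with x h
    show (2⁻¹:ℂ) • (V.toFun Φ x + V.toFun FR x) = _
    rw [h]
    have hcanc : V.toFun Φ x + ((2:ℂ) • ((inner ℂ v (V.toFun Φ x):ℂ) • v) - V.toFun Φ x)
        = (2:ℂ) • ((inner ℂ v (V.toFun Φ x):ℂ) • v) := by abel
    rw [hcanc, smul_smul]
    norm_num
  obtain ⟨eP, heP⟩ := V.norm_mem ((2⁻¹:ℂ) • (Φ + FR))
  have he' : W.toFun ((‖u‖ : ℂ) • eP) =ᵐ[volume] fun x => ((‖g x‖ : ℝ) : ℂ) := by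
    have heq : W.toFun ((‖u‖:ℂ) • eP) = (‖u‖:ℂ) • W.toFun eP := _root_.map_smul _ _ _
    rw [heq]
    filter_upwards [heP, hFP] with x h1 h2
    show (‖u‖:ℂ) • W.toFun eP x = _
    rw [h1, h2, smul_unit_norm hv, hinner_v]
    rw [norm_mul, Complex.norm_real, Real.norm_eq_abs, abs_of_pos (inv_pos.mpr hnu),
      smul_eq_mul]
    have hcne : ((‖u‖:ℝ) : ℂ) ≠ 0 := Complex.ofReal_ne_zero.mpr hnu.ne'
    push_cast
    field_simp
    rfl
  obtain ⟨Fg, hFg⟩ := V.mem_of_norm (fun x => g x • v)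
    (hg_meas.smul MeasureTheory.aestronglyMeasurable_const)
    (by filter_upwards [hg_supp] with x h hx; rw [h hx]; simp)
    ⟨(‖u‖:ℂ) • eP, by
      filter_upwards [he'] with x h
      rw [h, smul_unit_norm hv]⟩
  obtain ⟨Fc, hFc⟩ := V.mem_of_norm (fun x => (starRingEnd ℂ) (g x) • v)
    ((RCLike.continuous_conj.comp_aestronglyMeasurable hg_meas).smul
      MeasureTheory.aestronglyMeasurable_const)
    (by filter_upwards [hg_supp] with x h hx; rw [h hx]; simp)
    ⟨(‖u‖:ℂ) • eP, by
      filter_upwards [he'] with x h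
      rw [h, smul_unit_norm hv, RCLike.norm_conj]⟩
  have hre : V.toFun ((2⁻¹:ℂ) • (Fg + Fc)) =ᵐ[volume]
      fun x => (((g x).re : ℝ) : ℂ) • v := by
    have heq : V.toFun ((2⁻¹:ℂ) • (Fg + Fc)) = (2⁻¹:ℂ) • (V.toFun Fg + V.toFun Fc) := by
      rw [_root_.map_smul, map_add]
    rw [heq]
    filter_upwards [hFg, hFc] with x h1 h2
    show (2⁻¹:ℂ) • (V.toFun Fg x + V.toFun Fc x) = _
    rw [h1, h2, ← add_smul, smul_smul, Complex.add_conj]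
    congr 1
    push_cast
    ring
  obtain ⟨er, her⟩ := V.real_mem hv _ _ hre
  have him : V.toFun (((2 * Complex.I)⁻¹:ℂ) • (Fg - Fc)) =ᵐ[volume]
      fun x => (((g x).im : ℝ) : ℂ) • v := by
    have heq : V.toFun (((2 * Complex.I)⁻¹:ℂ) • (Fg - Fc))
        = ((2 * Complex.I)⁻¹:ℂ) • (V.toFun Fg - V.toFun Fc) := by
      rw [_root_.map_smul, map_sub]
    rw [heq]
    filter_upwards [hFg, hFc] with x h1 h2
    show ((2 * Complex.I)⁻¹:ℂ) • (V.toFun Fg x - V.toFun Fc x) = _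
    rw [h1, h2, ← sub_smul, smul_smul, Complex.sub_conj]
    congr 1
    have hI : (2 * Complex.I) ≠ 0 := by simp [Complex.I_ne_zero]
    field_simp
    push_cast
    ring
  obtain ⟨ei, hei⟩ := V.real_mem hv _ _ him
  refine ⟨er + Complex.I • ei, ?_⟩
  have heq : W.toFun (er + Complex.I • ei) = W.toFun er + Complex.I • W.toFun ei := by
    rw [map_add, _root_.map_smul]
  rw [heq]
  filter_upwards [her, hei] with x h1 h2
  show W.toFun er x + Complex.I • W.toFun ei x = _
  rw [h1, h2, smul_eq_mul, mul_comm, Complex.re_add_im]
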